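/- arXiv:2408.11171 — 8 statements merged into one kernel-verified Lean document; each statement's English description precedes it below -/
import Mathlib

section
/- Let σ > 0, ν > 0, L ∈ ℝ and h ∈ ℝ. Suppose e₁ : ℝ → ℝ is bounded and twice continuously differentiable on (−∞, L], satisfies ν²·e₁''(x) = σ·e₁(x) for all x ≤ L and e₁(L) = h; and suppose e₂ : ℝ → ℝ is bounded and twice continuously differentiable on [L, ∞), satisfies ν²·e₂''(x) = σ·e₂(x) for all x ≥ L and e₂'(L) = e₁'(L) (one-sided derivatives). Then e₂(L) = −h. -/
/-!
With `μ = √σ / ν` the equation reads `e'' = μ² e`, so `e' + μ e` and `e' - μ e` solve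
`y' = μ y` and `y' = -μ y`; hence every solution is a combination of `exp (μ x)` and
`exp (-μ x)`. Boundedness on `[L, ∞)` kills the growing mode, giving `e₂'(L) = -μ e₂(L)`, and
on `(-∞, L]` it kills the decaying one, giving `e₁'(L) = μ e₁(L)`. Equal fluxes then force
`e₂(L) = -e₁(L)`.
-/

open Set Filter Real

theorem Convex.eq_mul_exp_of_hasDerivWithinAt {S : Set ℝ} (hS : Convex ℝ S) {q : ℝ → ℝ} {c : ℝ}
    (hq : ∀ x ∈ S, HasDerivWithinAt q (c * q x) S x) {x₀ x : ℝ} (hx₀ : x₀ ∈ S) (hx : x ∈ S) :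
    q x = q x₀ * exp (c * (x - x₀)) := by
  have hderiv : ∀ y ∈ S, HasDerivWithinAt (fun w => q w * exp (-(c * w))) 0 S y := by
    intro y hy
    have hexp : HasDerivAt (fun w => exp (-(c * w))) (exp (-(c * y)) * -c) y := by
      simpa using ((hasDerivAt_id y).const_mul c).neg.exp
    exact ((hq y hy).mul hexp.hasDerivWithinAt).congr_deriv (by ring)
  have hconst : q x * exp (-(c * x)) = q x₀ * exp (-(c * x₀)) := by
    have := hS.norm_image_sub_le_of_norm_hasDerivWithin_le hderiv (fun _ _ => norm_zero.le) hx₀ hx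
    rwa [zero_mul, norm_le_zero_iff, sub_eq_zero] at this
  calc q x = q x * exp (-(c * x)) * exp (c * x) := by rw [mul_assoc, ← exp_add]; simp
    _ = q x₀ * exp (-(c * x₀)) * exp (c * x) := by rw [hconst]
    _ = q x₀ * exp (c * (x - x₀)) := by rw [mul_assoc, ← exp_add]; ring_nf

theorem Convex.eq_exp_combination_of_hasDerivWithinAt {S : Set ℝ} (hS : Convex ℝ S)
    {e e' : ℝ → ℝ} {μ : ℝ} (hμ : μ ≠ 0)
    (he : ∀ x ∈ S, HasDerivWithinAt e (e' x) S x)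
    (he' : ∀ x ∈ S, HasDerivWithinAt e' (μ ^ 2 * e x) S x)
    {x₀ x : ℝ} (hx₀ : x₀ ∈ S) (hx : x ∈ S) :
    e x = (e' x₀ + μ * e x₀) / (2 * μ) * exp (μ * (x - x₀))
      + (μ * e x₀ - e' x₀) / (2 * μ) * exp (-μ * (x - x₀)) := by
  have hgrowing := hS.eq_mul_exp_of_hasDerivWithinAt (q := fun w => e' w + μ * e w) (c := μ)
    (fun y hy => ((he' y hy).add ((he y hy).const_mul μ)).congr_deriv (by ring)) hx₀ hx
  have hdecaying := hS.eq_mul_exp_of_hasDerivWithinAt (q := fun w => e' w - μ * e w) (c := -μ)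
    (fun y hy => ((he' y hy).sub ((he y hy).const_mul μ)).congr_deriv (by ring)) hx₀ hx
  rw [neg_mul] at hdecaying ⊢
  field_simp
  linear_combination hgrowing - hdecaying

theorem Convex.eq_exp_combination_of_contDiffOn {S : Set ℝ} (hS : Convex ℝ S)
    (hU : UniqueDiffOn ℝ S) {e : ℝ → ℝ} {μ : ℝ} (hμ : μ ≠ 0) (he : ContDiffOn ℝ 2 e S)
    (hode : ∀ x ∈ S, derivWithin (derivWithin e S) S x = μ ^ 2 * e x)
    {x₀ x : ℝ} (hx₀ : x₀ ∈ S) (hx : x ∈ S) :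
    e x = (derivWithin e S x₀ + μ * e x₀) / (2 * μ) * exp (μ * (x - x₀))
      + (μ * e x₀ - derivWithin e S x₀) / (2 * μ) * exp (-μ * (x - x₀)) := by
  have he' : ContDiffOn ℝ 1 (derivWithin e S) S := he.derivWithin hU (m := 1) (by norm_num)
  refine hS.eq_exp_combination_of_hasDerivWithinAt hμ
    (fun y hy => (he.differentiableOn two_ne_zero y hy).hasDerivWithinAt)
    (fun y hy => ?_) hx₀ hx
  rw [← hode y hy]
  exact (he'.differentiableOn one_ne_zero y hy).hasDerivWithinAt

theorem eq_zero_of_abs_mul_exp_add_mul_exp_neg_le {A B μ M : ℝ} (hμ : 0 < μ)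
    (h : ∀ t, 0 ≤ t → |A * exp (μ * t) + B * exp (-μ * t)| ≤ M) : A = 0 := by
  by_contra hA
  have hgrow : Tendsto (fun t => |A| * exp (μ * t)) atTop atTop :=
    (tendsto_exp_atTop.comp (tendsto_id.const_mul_atTop hμ)).const_mul_atTop (abs_pos.2 hA)
  obtain ⟨t, ht, hbig⟩ :=
    ((eventually_ge_atTop 0).and (hgrow.eventually_gt_atTop (M + |B|))).exists
  have hdecay : |B * exp (-μ * t)| ≤ |B| := by
    rw [abs_mul, abs_of_pos (exp_pos _)]
    exact mul_le_of_le_one_right (abs_nonneg B) (exp_le_one_iff.2 (by nlinarith))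
  have := abs_sub (A * exp (μ * t) + B * exp (-μ * t)) (B * exp (-μ * t))
  rw [add_sub_cancel_right, abs_mul, abs_of_pos (exp_pos _)] at this
  linarith [h t ht]

theorem derivWithin_Ici_eq_neg_mul_of_bounded {e : ℝ → ℝ} {μ L : ℝ} (hμ : 0 < μ)
    (hbdd : ∃ M : ℝ, ∀ x ∈ Ici L, |e x| ≤ M) (he : ContDiffOn ℝ 2 e (Ici L))
    (hode : ∀ x ∈ Ici L, derivWithin (derivWithin e (Ici L)) (Ici L) x = μ ^ 2 * e x) :
    derivWithin e (Ici L) L = -(μ * e L) := by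
  obtain ⟨M, hM⟩ := hbdd
  have hgrowing : (derivWithin e (Ici L) L + μ * e L) / (2 * μ) = 0 := by
    refine eq_zero_of_abs_mul_exp_add_mul_exp_neg_le (M := M)
      (B := (μ * e L - derivWithin e (Ici L) L) / (2 * μ)) hμ fun t ht => ?_
    have hxt : L + t ∈ Ici L := by simpa using ht
    have hform := (convex_Ici L).eq_exp_combination_of_contDiffOn (uniqueDiffOn_Ici L) hμ.ne' he
      hode self_mem_Ici hxt
    rw [add_sub_cancel_left] at hform
    rw [← hform]
    exact hM _ hxt
  rw [div_eq_zero_iff, or_iff_left (by positivity)] at hgrowing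
  linarith

theorem derivWithin_Iic_eq_mul_of_bounded {e : ℝ → ℝ} {μ L : ℝ} (hμ : 0 < μ)
    (hbdd : ∃ M : ℝ, ∀ x ∈ Iic L, |e x| ≤ M) (he : ContDiffOn ℝ 2 e (Iic L))
    (hode : ∀ x ∈ Iic L, derivWithin (derivWithin e (Iic L)) (Iic L) x = μ ^ 2 * e x) :
    derivWithin e (Iic L) L = μ * e L := by
  obtain ⟨M, hM⟩ := hbdd
  have hgrowing : (μ * e L - derivWithin e (Iic L) L) / (2 * μ) = 0 := by
    refine eq_zero_of_abs_mul_exp_add_mul_exp_neg_le (M := M)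
      (B := (derivWithin e (Iic L) L + μ * e L) / (2 * μ)) hμ fun t ht => ?_
    have hxt : L - t ∈ Iic L := by simpa using ht
    have hform := (convex_Iic L).eq_exp_combination_of_contDiffOn (uniqueDiffOn_Iic L) hμ.ne' he
      hode self_mem_Iic hxt
    rw [sub_sub_cancel_left, mul_neg, neg_mul_neg, add_comm, ← neg_mul] at hform
    rw [← hform]
    exact hM _ hxt
  rw [div_eq_zero_iff, or_iff_left (by positivity)] at hgrowing
  linarith

theorem dnwr_halfline_transmission
    (σ ν L h : ℝ) (hσ : 0 < σ) (hν : 0 < ν)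
    (e₁ e₂ : ℝ → ℝ)
    (h1bdd : ∃ M : ℝ, ∀ x ∈ Iic L, |e₁ x| ≤ M)
    (h1C2 : ContDiffOn ℝ 2 e₁ (Iic L))
    (h1ode : ∀ x ∈ Iic L,
      ν ^ 2 * derivWithin (derivWithin e₁ (Iic L)) (Iic L) x = σ * e₁ x)
    (h1L : e₁ L = h)
    (h2bdd : ∃ M : ℝ, ∀ x ∈ Ici L, |e₂ x| ≤ M)
    (h2C2 : ContDiffOn ℝ 2 e₂ (Ici L))
    (h2ode : ∀ x ∈ Ici L,
      ν ^ 2 * derivWithin (derivWithin e₂ (Ici L)) (Ici L) x = σ * e₂ x)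
    (hflux : derivWithin e₂ (Ici L) L = derivWithin e₁ (Iic L) L) :
    e₂ L = -h := by
  set μ := √σ / ν
  have hμ : 0 < μ := div_pos (sqrt_pos.2 hσ) hν
  have hσμ : σ = μ ^ 2 * ν ^ 2 := by rw [div_pow, sq_sqrt hσ.le]; field_simp
  have normalize : ∀ {y z : ℝ}, ν ^ 2 * y = σ * z → y = μ ^ 2 * z := fun {y z} hyz =>
    mul_left_cancel₀ (pow_ne_zero 2 hν.ne') (by linear_combination hyz + z * hσμ)
  have hleft := derivWithin_Iic_eq_mul_of_bounded hμ h1bdd h1C2 fun x hx => normalize (h1ode x hx)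
  have hright :=
    derivWithin_Ici_eq_neg_mul_of_bounded hμ h2bdd h2C2 fun x hx => normalize (h2ode x hx)
  rw [hflux, hleft, h1L] at hright
  exact mul_left_cancel₀ hμ.ne' (by linarith)
end

section
/- Let σ > 0, ν > 0, L ∈ ℝ and g ∈ ℝ. Suppose e₁, φ₁ : ℝ → ℝ are bounded and twice continuously differentiable on (−∞, L] with ν²·e₁'' = σ·e₁ and ν²·φ₁'' = σ·φ₁ on (−∞, L], and e₂, φ₂ : ℝ → ℝ are bounded and twice continuously differentiable on [L, ∞) with ν²·e₂'' = σ·e₂ and ν²·φ₂'' = σ·φ₂ on [L, ∞). Assume e₁(L) = g, e₂(L) = g, φ₁'(L) = e₁'(L) − e₂'(L) and −φ₂'(L) = e₁'(L) − e₂'(L) (one-sided derivatives at L). Then φ₁(L) = 2g and φ₂(L) = 2g, so for every θ ∈ ℝ one has g − θ·(φ₁(L) + φ₂(L)) = (1 − 4θ)·g. -/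
/-!
Put `k = √σ / ν`, so that the equation reads `u'' = k² u`. Then `u' + k u` and `u' - k u` solve
`w' = k w` and `w' = -k w`, which gives the general solution
`2 k u(x) = (u'(L) + k u(L)) e^{k(x-L)} - (u'(L) - k u(L)) e^{-k(x-L)}`.
A solution bounded on a half-line cannot contain the mode growing along it, whence the
Dirichlet-to-Neumann relations `u'(L) = k u(L)` on `(-∞, L]` and `u'(L) = -k u(L)` on `[L, ∞)`.
For the Dirichlet solves the interface flux jump is then `e₁'(L) - e₂'(L) = 2 k g`, and the
Neumann solves, subject to the same relations, return `k φᵢ(L) = 2 k g`.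
-/

open Set Real

section HalfLine

variable {s : Set ℝ} {u u' : ℝ → ℝ} {k L : ℝ}

theorem eq_mul_exp_of_hasDerivWithinAt {w : ℝ → ℝ} {a x : ℝ} (hs : Convex ℝ s) (hL : L ∈ s)
    (hw : ∀ y ∈ s, HasDerivWithinAt w (a * w y) s y) (hx : x ∈ s) :
    w x = w L * exp (a * (x - L)) := by
  set f : ℝ → ℝ := fun y ↦ w y * exp (-a * (y - L))
  have hf : ∀ y ∈ s, HasDerivWithinAt f 0 s y := by
    intro y hy
    have hexp : HasDerivAt (fun y ↦ exp (-a * (y - L))) (exp (-a * (y - L)) * (-a * 1)) y :=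
      (((hasDerivAt_id y).sub_const L).const_mul (-a)).exp
    exact ((hw y hy).mul hexp.hasDerivWithinAt).congr_deriv (by ring)
  have hconst : f x = f L := by
    simpa [sub_eq_zero] using
      hs.norm_image_sub_le_of_norm_hasDerivWithin_le hf (fun _ _ ↦ norm_zero.le) hL hx
  have hinv : exp (-a * (x - L)) * exp (a * (x - L)) = 1 := by
    rw [← exp_add]; simp
  simp only [f, sub_self, mul_zero, exp_zero, mul_one] at hconst
  calc w x = w x * exp (-a * (x - L)) * exp (a * (x - L)) := by rw [mul_assoc, hinv, mul_one]
    _ = w L * exp (a * (x - L)) := by rw [hconst]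

theorem two_mul_mul_eq_of_hasDerivWithinAt {x : ℝ} (hs : Convex ℝ s) (hL : L ∈ s)
    (hu : ∀ y ∈ s, HasDerivWithinAt u (u' y) s y)
    (hu' : ∀ y ∈ s, HasDerivWithinAt u' (k ^ 2 * u y) s y) (hx : x ∈ s) :
    2 * k * u x = (u' L + k * u L) * exp (k * (x - L))
      - (u' L - k * u L) * exp (-k * (x - L)) := by
  have hrate : ∀ c, c ^ 2 = k ^ 2 →
      u' x + c * u x = (u' L + c * u L) * exp (c * (x - L)) := fun c hc ↦
    eq_mul_exp_of_hasDerivWithinAt (w := fun y ↦ u' y + c * u y) hs hL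
      (fun y hy ↦ ((hu' y hy).add ((hu y hy).const_mul c)).congr_deriv (by rw [← hc]; ring)) hx
  have hplus := hrate k rfl
  have hminus := hrate (-k) (neg_sq k)
  linear_combination hplus - hminus

theorem eq_zero_of_forall_abs_mul_exp_le {A C : ℝ} (h : ∀ t ≥ 0, |A * exp t| ≤ C) : A = 0 := by
  by_contra hA
  set t := max 0 (C / |A|)
  have hgrowth : C < |A| * exp t := by
    rw [← div_lt_iff₀' (abs_pos.2 hA)]
    linarith [le_max_right 0 (C / |A|), add_one_le_exp t]
  have := h t (le_max_left _ _)
  rw [abs_mul, abs_of_pos (exp_pos t)] at this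
  linarith

theorem add_mul_eq_zero_of_bounded_of_hasDerivWithinAt (hs : Convex ℝ s) (hL : L ∈ s)
    (hu : ∀ y ∈ s, HasDerivWithinAt u (u' y) s y)
    (hu' : ∀ y ∈ s, HasDerivWithinAt u' (k ^ 2 * u y) s y)
    (hray : ∀ t ≥ 0, ∃ x ∈ s, k * (x - L) = t) (hb : ∃ M, ∀ x ∈ s, |u x| ≤ M) :
    u' L + k * u L = 0 := by
  obtain ⟨M, hM⟩ := hb
  refine eq_zero_of_forall_abs_mul_exp_le (C := |2 * k| * M + |u' L - k * u L|) fun t ht ↦ ?_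
  obtain ⟨x, hx, rfl⟩ := hray t ht
  have hdecay : exp (-k * (x - L)) ≤ 1 := exp_le_one_iff.2 (by linarith [neg_mul k (x - L)])
  calc |(u' L + k * u L) * exp (k * (x - L))|
      = |2 * k * u x + (u' L - k * u L) * exp (-k * (x - L))| := by
        rw [two_mul_mul_eq_of_hasDerivWithinAt hs hL hu hu' hx, sub_add_cancel]
    _ ≤ |2 * k| * |u x| + |u' L - k * u L| * exp (-k * (x - L)) := by
        rw [← abs_mul, ← abs_of_pos (exp_pos (-k * (x - L))), ← abs_mul, abs_exp]
        exact abs_add_le _ _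
    _ ≤ |2 * k| * M + |u' L - k * u L| := by
        gcongr
        · exact hM x hx
        · exact mul_le_of_le_one_right (abs_nonneg _) hdecay

theorem derivWithin_add_mul_eq_zero_of_bounded {σ ν : ℝ} (hs : UniqueDiffOn ℝ s)
    (hconv : Convex ℝ s) (hL : L ∈ s) (hν : ν ≠ 0) (hk : (ν * k) ^ 2 = σ)
    (hray : ∀ t ≥ 0, ∃ x ∈ s, k * (x - L) = t) (hb : ∃ M, ∀ x ∈ s, |u x| ≤ M)
    (hC2 : ContDiffOn ℝ 2 u s)
    (hode : ∀ x ∈ s, ν ^ 2 * derivWithin (derivWithin u s) s x = σ * u x) :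
    derivWithin u s L + k * u L = 0 := by
  refine add_mul_eq_zero_of_bounded_of_hasDerivWithinAt hconv hL
    (fun x hx ↦ (hC2.differentiableOn two_ne_zero x hx).hasDerivWithinAt)
    (fun x hx ↦ ?_) hray hb
  have hu'C1 : ContDiffOn ℝ 1 (derivWithin u s) s := hC2.derivWithin hs (by norm_num)
  refine ((hu'C1.differentiableOn one_ne_zero x hx).hasDerivWithinAt).congr_deriv ?_
  refine mul_left_cancel₀ (pow_ne_zero 2 hν) ?_
  rw [hode x hx, ← hk]
  ring

end HalfLine

theorem derivWithin_Iic_self_eq_of_bounded {σ ν L : ℝ} {u : ℝ → ℝ} (hσ : 0 < σ) (hν : 0 < ν)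
    (hb : ∃ M, ∀ x ∈ Iic L, |u x| ≤ M) (hC2 : ContDiffOn ℝ 2 u (Iic L))
    (hode : ∀ x ∈ Iic L, ν ^ 2 * derivWithin (derivWithin u (Iic L)) (Iic L) x = σ * u x) :
    derivWithin u (Iic L) L = √σ / ν * u L := by
  have hk : 0 < √σ / ν := by positivity
  have := derivWithin_add_mul_eq_zero_of_bounded (k := -(√σ / ν)) (uniqueDiffOn_Iic L)
    (convex_Iic L) self_mem_Iic hν.ne'
    (by rw [mul_neg, neg_sq, mul_div_cancel₀ _ hν.ne', sq_sqrt hσ.le])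
    (fun t ht ↦ ⟨L - t / (√σ / ν), by simp only [mem_Iic]; linarith [div_nonneg ht hk.le],
      by field_simp; ring⟩) hb hC2 hode
  linear_combination this

theorem derivWithin_Ici_self_eq_of_bounded {σ ν L : ℝ} {u : ℝ → ℝ} (hσ : 0 < σ) (hν : 0 < ν)
    (hb : ∃ M, ∀ x ∈ Ici L, |u x| ≤ M) (hC2 : ContDiffOn ℝ 2 u (Ici L))
    (hode : ∀ x ∈ Ici L, ν ^ 2 * derivWithin (derivWithin u (Ici L)) (Ici L) x = σ * u x) :
    derivWithin u (Ici L) L = -(√σ / ν) * u L := by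
  have hk : 0 < √σ / ν := by positivity
  have := derivWithin_add_mul_eq_zero_of_bounded (k := √σ / ν) (uniqueDiffOn_Ici L)
    (convex_Ici L) self_mem_Ici hν.ne' (by rw [mul_div_cancel₀ _ hν.ne', sq_sqrt hσ.le])
    (fun t ht ↦ ⟨L + t / (√σ / ν), by simp only [mem_Ici]; linarith [div_nonneg ht hk.le],
      by field_simp; ring⟩) hb hC2 hode
  linear_combination this

theorem nnwr_halfline_onestep
    (σ ν L g : ℝ) (hσ : 0 < σ) (hν : 0 < ν)
    (e₁ φ₁ e₂ φ₂ : ℝ → ℝ)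
    (he₁bdd : ∃ M : ℝ, ∀ x ∈ Iic L, |e₁ x| ≤ M)
    (he₁C2 : ContDiffOn ℝ 2 e₁ (Iic L))
    (he₁ode : ∀ x ∈ Iic L,
      ν ^ 2 * derivWithin (derivWithin e₁ (Iic L)) (Iic L) x = σ * e₁ x)
    (hφ₁bdd : ∃ M : ℝ, ∀ x ∈ Iic L, |φ₁ x| ≤ M)
    (hφ₁C2 : ContDiffOn ℝ 2 φ₁ (Iic L))
    (hφ₁ode : ∀ x ∈ Iic L,
      ν ^ 2 * derivWithin (derivWithin φ₁ (Iic L)) (Iic L) x = σ * φ₁ x)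
    (he₂bdd : ∃ M : ℝ, ∀ x ∈ Ici L, |e₂ x| ≤ M)
    (he₂C2 : ContDiffOn ℝ 2 e₂ (Ici L))
    (he₂ode : ∀ x ∈ Ici L,
      ν ^ 2 * derivWithin (derivWithin e₂ (Ici L)) (Ici L) x = σ * e₂ x)
    (hφ₂bdd : ∃ M : ℝ, ∀ x ∈ Ici L, |φ₂ x| ≤ M)
    (hφ₂C2 : ContDiffOn ℝ 2 φ₂ (Ici L))
    (hφ₂ode : ∀ x ∈ Ici L,
      ν ^ 2 * derivWithin (derivWithin φ₂ (Ici L)) (Ici L) x = σ * φ₂ x)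
    (he₁L : e₁ L = g) (he₂L : e₂ L = g)
    (hφ₁flux : derivWithin φ₁ (Iic L) L
      = derivWithin e₁ (Iic L) L - derivWithin e₂ (Ici L) L)
    (hφ₂flux : -derivWithin φ₂ (Ici L) L
      = derivWithin e₁ (Iic L) L - derivWithin e₂ (Ici L) L) :
    φ₁ L = 2 * g ∧ φ₂ L = 2 * g ∧
      ∀ θ : ℝ, g - θ * (φ₁ L + φ₂ L) = (1 - 4 * θ) * g := by
  have hk : √σ / ν ≠ 0 := by positivity
  have he₁' := derivWithin_Iic_self_eq_of_bounded hσ hν he₁bdd he₁C2 he₁ode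
  have he₂' := derivWithin_Ici_self_eq_of_bounded hσ hν he₂bdd he₂C2 he₂ode
  have hφ₁' := derivWithin_Iic_self_eq_of_bounded hσ hν hφ₁bdd hφ₁C2 hφ₁ode
  have hφ₂' := derivWithin_Ici_self_eq_of_bounded hσ hν hφ₂bdd hφ₂C2 hφ₂ode
  have hφ₁L : φ₁ L = 2 * g := mul_left_cancel₀ hk <| by
    linear_combination hφ₁flux - hφ₁' + he₁' - he₂' + √σ / ν * (he₁L + he₂L)
  have hφ₂L : φ₂ L = 2 * g := mul_left_cancel₀ hk <| by
    linear_combination hφ₂flux + hφ₂' + he₁' - he₂' + √σ / ν * (he₁L + he₂L)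
  exact ⟨hφ₁L, hφ₂L, fun θ ↦ by rw [hφ₁L, hφ₂L]; ring⟩
end

section
/- Let ν > 0, τ > 0, a₁, a₂, L, θ ∈ ℝ, and let s ∈ ℝ be such that σ := s + a₁ + a₂·e^{−τs} > 0. Let (h_k)_{k≥0} be a sequence of real numbers and suppose that for every k ≥ 1 there exist functions e₁ᵏ, e₂ᵏ : ℝ → ℝ such that: (i) e₁ᵏ is bounded and twice continuously differentiable on (−∞, L], satisfies ν²·(e₁ᵏ)''(x) = σ·e₁ᵏ(x) for all x ≤ L, and e₁ᵏ(L) = h_{k−1}; (ii) e₂ᵏ is bounded and twice continuously differentiable on [L, ∞), satisfies ν²·(e₂ᵏ)''(x) = σ·e₂ᵏ(x) for all x ≥ L, and (e₂ᵏ)'(L) = (e₁ᵏ)'(L) (one-sided derivatives); (iii) h_k = θ·e₂ᵏ(L) + (1 − θ)·h_{k−1}. Then h_k = (1 − 2θ)ᵏ·h_0 for all k ≥ 0. Consequently, if θ = 1/2 then h_k = 0 for all k ≥ 1, and if 0 < θ < 1 then |h_k| ≤ |1 − 2θ|ᵏ·|h_0| and h_k → 0 as k → ∞. -/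
/-!
For every real `c`, a `C²` solution of `f'' = c² f` on an interval keeps `(f' - c f) e^{c x}` constant.
Combining the constants for `c` and `-c` gives `(f' - c f)(y) e^{c y} = A e^{2 c x} - 2 c f(x) e^{c x}`,
and if `f` is bounded and `e^{c x} → 0` along the interval, the right side tends to `0`: a bounded
solution satisfies `f' = c f`. With `c = √σ / ν` on `(-∞, L]` and `c = -√σ / ν` on `[L, ∞)`,
the Neumann matching `e₂'(L) = e₁'(L)` forces `e₂(L) = -e₁(L) = -h_{k-1}`, so the relaxation
step is `h_k = (1 - 2θ) h_{k-1}`.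
-/

open Set Filter Topology Real

theorem Convex.derivWithin_sub_mul_mul_exp_eq {f : ℝ → ℝ} {S : Set ℝ} {c x y : ℝ}
    (hS : Convex ℝ S) (hU : UniqueDiffOn ℝ S) (hf : ContDiffOn ℝ 2 f S)
    (hode : ∀ z ∈ S, derivWithin (derivWithin f S) S z = c ^ 2 * f z)
    (hx : x ∈ S) (hy : y ∈ S) :
    (derivWithin f S x - c * f x) * exp (c * x)
      = (derivWithin f S y - c * f y) * exp (c * y) := by
  have hf₁ : DifferentiableOn ℝ f S := hf.differentiableOn (by norm_num)
  have hf₂ : DifferentiableOn ℝ (derivWithin f S) S :=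
    (hf.derivWithin hU (by norm_num : (1 : WithTop ℕ∞) + 1 ≤ 2)).differentiableOn one_ne_zero
  have hderiv : ∀ z ∈ S, HasDerivWithinAt
      (fun t => (derivWithin f S t - c * f t) * exp (c * t)) 0 S z := by
    intro z hz
    have hexp : HasDerivAt (fun t => exp (c * t)) (exp (c * z) * c) z := by
      simpa using ((hasDerivAt_id z).const_mul c).exp
    refine (((hf₂ z hz).hasDerivWithinAt.sub ((hf₁ z hz).hasDerivWithinAt.const_mul c)).mul
      hexp.hasDerivWithinAt).congr_deriv ?_
    rw [hode z hz, Pi.sub_apply]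
    ring
  have := hS.norm_image_sub_le_of_norm_hasDerivWithin_le hderiv (fun _ _ => norm_zero.le) hy hx
  rwa [zero_mul, norm_le_zero_iff, sub_eq_zero] at this

theorem derivWithin_eq_mul_of_bounded_of_tendsto_exp {f : ℝ → ℝ} {S : Set ℝ} {c y M : ℝ}
    {l : Filter ℝ} [l.NeBot] (hS : Convex ℝ S) (hU : UniqueDiffOn ℝ S) (hf : ContDiffOn ℝ 2 f S)
    (hode : ∀ z ∈ S, derivWithin (derivWithin f S) S z = c ^ 2 * f z)
    (hbdd : ∀ x ∈ S, |f x| ≤ M) (hSl : S ∈ l) (hexp : Tendsto (fun x => exp (c * x)) l (𝓝 0))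
    (hy : y ∈ S) :
    derivWithin f S y = c * f y := by
  set B := (derivWithin f S y - c * f y) * exp (c * y) with hBdef
  set A := (derivWithin f S y - -c * f y) * exp (-c * y) with hAdef
  have hB : ∀ x ∈ S, B = A * exp (c * x) * exp (c * x) - 2 * c * (f x * exp (c * x)) := by
    intro x hx
    have hBx := hS.derivWithin_sub_mul_mul_exp_eq hU hf hode hx hy
    have hAx := hS.derivWithin_sub_mul_mul_exp_eq hU hf (c := -c)
      (fun z hz => by rw [hode z hz, neg_sq]) hx hy
    have hinv : exp (c * x) * exp (-c * x) = 1 := by rw [← exp_add]; simp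
    rw [hBdef, hAdef, ← hBx, ← hAx]
    linear_combination (-(derivWithin f S x + c * f x) * exp (c * x)) * hinv
  have hlim : Tendsto (fun x => A * exp (c * x) * exp (c * x) - 2 * c * (f x * exp (c * x)))
      l (𝓝 0) := by
    have h₁ := (hexp.const_mul A).mul hexp
    have h₂ := (bdd_le_mul_tendsto_zero' M (mem_of_superset hSl hbdd) hexp).const_mul (2 * c)
    simpa using h₁.sub h₂
  have hev : ∀ᶠ x in l, B = A * exp (c * x) * exp (c * x) - 2 * c * (f x * exp (c * x)) :=
    mem_of_superset hSl hB
  have hB0 : B = 0 := tendsto_nhds_unique (tendsto_const_nhds.congr' hev) hlim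
  rw [mul_eq_zero, sub_eq_zero] at hB0
  exact hB0.resolve_right (exp_pos _).ne'

theorem eq_neg_of_derivWithin_Ici_eq_derivWithin_Iic {ν σ L M₁ M₂ : ℝ} {e₁ e₂ : ℝ → ℝ}
    (hν : 0 < ν) (hσ : 0 < σ)
    (hb₁ : ∀ x ∈ Iic L, |e₁ x| ≤ M₁) (hc₁ : ContDiffOn ℝ 2 e₁ (Iic L))
    (hode₁ : ∀ x ∈ Iic L, ν ^ 2 * derivWithin (derivWithin e₁ (Iic L)) (Iic L) x = σ * e₁ x)
    (hb₂ : ∀ x ∈ Ici L, |e₂ x| ≤ M₂) (hc₂ : ContDiffOn ℝ 2 e₂ (Ici L))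
    (hode₂ : ∀ x ∈ Ici L, ν ^ 2 * derivWithin (derivWithin e₂ (Ici L)) (Ici L) x = σ * e₂ x)
    (hder : derivWithin e₂ (Ici L) L = derivWithin e₁ (Iic L) L) :
    e₂ L = -e₁ L := by
  set c := √σ / ν
  have hc : 0 < c := by positivity
  have hcν : ν ^ 2 * c ^ 2 = σ := by
    rw [div_pow, sq_sqrt hσ.le, mul_div_cancel₀ _ (by positivity)]
  have normalize : ∀ {S : Set ℝ} {f g : ℝ → ℝ}, (∀ x ∈ S, ν ^ 2 * g x = σ * f x) →
      ∀ x ∈ S, g x = c ^ 2 * f x := fun hode x hx =>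
    mul_left_cancel₀ (by positivity : ν ^ 2 ≠ 0) (by rw [hode x hx, ← mul_assoc, hcν])
  have hd₁ : derivWithin e₁ (Iic L) L = c * e₁ L :=
    derivWithin_eq_mul_of_bounded_of_tendsto_exp (convex_Iic L) (uniqueDiffOn_Iic L) hc₁
      (normalize hode₁) hb₁ (Iic_mem_atBot L)
      (tendsto_exp_atBot.comp (tendsto_id.const_mul_atBot hc)) self_mem_Iic
  have hd₂ : derivWithin e₂ (Ici L) L = -c * e₂ L :=
    derivWithin_eq_mul_of_bounded_of_tendsto_exp (convex_Ici L) (uniqueDiffOn_Ici L) hc₂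
      (fun x hx => by rw [neg_sq]; exact normalize hode₂ x hx) hb₂ (Ici_mem_atTop L)
      (tendsto_exp_atBot.comp (tendsto_id.const_mul_atTop_of_neg (neg_neg_of_pos hc)))
      self_mem_Ici
  rw [hd₁, hd₂, neg_mul, ← mul_neg] at hder
  exact neg_eq_iff_eq_neg.mp (mul_left_cancel₀ hc.ne' hder)

theorem dnwr_delay_parabolic_convergence_general
    (ν τ a₁ a₂ L θ s : ℝ) (hν : 0 < ν)
    (hσ : 0 < s + a₁ + a₂ * Real.exp (-τ * s))
    (h : ℕ → ℝ)
    (hiter : ∀ k : ℕ, ∃ e₁ e₂ : ℝ → ℝ,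
      (∃ M : ℝ, ∀ x ∈ Iic L, |e₁ x| ≤ M) ∧
      ContDiffOn ℝ 2 e₁ (Iic L) ∧
      (∀ x ∈ Iic L, ν ^ 2 * derivWithin (derivWithin e₁ (Iic L)) (Iic L) x
          = (s + a₁ + a₂ * Real.exp (-τ * s)) * e₁ x) ∧
      e₁ L = h k ∧
      (∃ M : ℝ, ∀ x ∈ Ici L, |e₂ x| ≤ M) ∧
      ContDiffOn ℝ 2 e₂ (Ici L) ∧
      (∀ x ∈ Ici L, ν ^ 2 * derivWithin (derivWithin e₂ (Ici L)) (Ici L) x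
          = (s + a₁ + a₂ * Real.exp (-τ * s)) * e₂ x) ∧
      derivWithin e₂ (Ici L) L = derivWithin e₁ (Iic L) L ∧
      h (k + 1) = θ * e₂ L + (1 - θ) * h k) :
    (∀ k : ℕ, h k = (1 - 2 * θ) ^ k * h 0) ∧
    (θ = 1 / 2 → ∀ k : ℕ, 1 ≤ k → h k = 0) ∧
    (0 < θ → θ < 1 →
      (∀ k : ℕ, |h k| ≤ |1 - 2 * θ| ^ k * |h 0|) ∧
      Tendsto h atTop (nhds 0)) := by
  have hstep : ∀ k, h (k + 1) = (1 - 2 * θ) * h k := fun k => by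
    obtain ⟨e₁, e₂, ⟨M₁, hb₁⟩, hc₁, hode₁, he₁L, ⟨M₂, hb₂⟩, hc₂, hode₂, hder, hupdate⟩ := hiter k
    rw [hupdate, eq_neg_of_derivWithin_Ici_eq_derivWithin_Iic hν hσ hb₁ hc₁ hode₁ hb₂ hc₂ hode₂
      hder, he₁L]
    ring
  have hclosed : ∀ k, h k = (1 - 2 * θ) ^ k * h 0 := fun k => by
    induction k with
    | zero => simp
    | succ k ih => rw [hstep, ih, pow_succ]; ring
  refine ⟨hclosed, fun hθ k hk => ?_, fun hθ₀ hθ₁ => ⟨fun k => ?_, ?_⟩⟩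
  · rw [hclosed, hθ]
    norm_num [zero_pow (Nat.one_le_iff_ne_zero.mp hk)]
  · rw [hclosed, abs_mul, abs_pow]
  · have hρ : |1 - 2 * θ| < 1 := abs_lt.mpr ⟨by linarith, by linarith⟩
    simpa [← hclosed] using (tendsto_pow_atTop_nhds_zero_of_abs_lt_one hρ).mul_const (h 0)

theorem dnwr_delay_parabolic_convergence
    (ν τ a₁ a₂ L θ s : ℝ) (hν : 0 < ν) (hτ : 0 < τ)
    (hσ : 0 < s + a₁ + a₂ * Real.exp (-τ * s))
    (h : ℕ → ℝ)
    (hiter : ∀ k : ℕ, ∃ e₁ e₂ : ℝ → ℝ,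
      (∃ M : ℝ, ∀ x ∈ Iic L, |e₁ x| ≤ M) ∧
      ContDiffOn ℝ 2 e₁ (Iic L) ∧
      (∀ x ∈ Iic L, ν ^ 2 * derivWithin (derivWithin e₁ (Iic L)) (Iic L) x
          = (s + a₁ + a₂ * Real.exp (-τ * s)) * e₁ x) ∧
      e₁ L = h k ∧
      (∃ M : ℝ, ∀ x ∈ Ici L, |e₂ x| ≤ M) ∧
      ContDiffOn ℝ 2 e₂ (Ici L) ∧
      (∀ x ∈ Ici L, ν ^ 2 * derivWithin (derivWithin e₂ (Ici L)) (Ici L) x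
          = (s + a₁ + a₂ * Real.exp (-τ * s)) * e₂ x) ∧
      derivWithin e₂ (Ici L) L = derivWithin e₁ (Iic L) L ∧
      h (k + 1) = θ * e₂ L + (1 - θ) * h k) :
    (∀ k : ℕ, h k = (1 - 2 * θ) ^ k * h 0) ∧
    (θ = 1 / 2 → ∀ k : ℕ, 1 ≤ k → h k = 0) ∧
    (0 < θ → θ < 1 →
      (∀ k : ℕ, |h k| ≤ |1 - 2 * θ| ^ k * |h 0|) ∧
      Tendsto h atTop (nhds 0)) :=
  dnwr_delay_parabolic_convergence_general ν τ a₁ a₂ L θ s hν hσ h hiter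
end

section
/- Let ν > 0, τ > 0, a₁, a₂, L, θ ∈ ℝ, and let s ∈ ℝ be such that σ := s + a₁ + a₂·e^{−τs} > 0. Let (g_k)_{k≥0} be a sequence of real numbers and suppose that for every k ≥ 1 there exist functions e₁ᵏ, φ₁ᵏ (bounded and twice continuously differentiable on (−∞, L], satisfying ν²·f'' = σ·f there) and e₂ᵏ, φ₂ᵏ (bounded and twice continuously differentiable on [L, ∞), satisfying ν²·f'' = σ·f there) such that e₁ᵏ(L) = g_{k−1}, e₂ᵏ(L) = g_{k−1}, (φ₁ᵏ)'(L) = (e₁ᵏ)'(L) − (e₂ᵏ)'(L), −(φ₂ᵏ)'(L) = (e₁ᵏ)'(L) − (e₂ᵏ)'(L) (one-sided derivatives), and g_k = g_{k−1} − θ·(φ₁ᵏ(L) + φ₂ᵏ(L)). Then g_k = (1 − 4θ)ᵏ·g_0 for all k ≥ 0. Consequently, if θ = 1/4 then g_k = 0 for all k ≥ 1, and if 0 < θ < 1/2 then |g_k| ≤ |1 − 4θ|ᵏ·|g_0| and g_k → 0 as k → ∞. -/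
/-!
On each half-line the error equation `ν² f'' = σ f` has the modes `exp (± μ x)` with
`μ = √σ / ν`, and boundedness kills the mode growing away from the interface. Hence every
subdomain solution is a multiple of the decaying mode and its one-sided flux at `L` is `± μ`
times its value there. The Dirichlet errors therefore have flux jump `2 μ g_{k-1}`, both
Neumann corrections have interface value `2 g_{k-1}`, and the update becomes
`g_k = (1 - 4 θ) g_{k-1}`.
-/

open Set Filter

lemma eq_zero_of_eventually_abs_mul_exp_le {α : Type*} {l : Filter α} [l.NeBot] {φ : α → ℝ}
    {c M : ℝ} (hφ : Tendsto φ l atTop) (h : ∀ᶠ x in l, |c * Real.exp (φ x)| ≤ M) : c = 0 := by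
  by_contra hc
  have hgrow : Tendsto (fun x => |c * Real.exp (φ x)|) l atTop := by
    simp_rw [abs_mul, Real.abs_exp]
    exact (Real.tendsto_exp_atTop.comp hφ).const_mul_atTop (abs_pos.2 hc)
  obtain ⟨x, hx_gt, hx_le⟩ := ((hgrow.eventually_gt_atTop M).and h).exists
  linarith

lemma eq_sqrt_div_sq_mul_of_sq_mul_eq {ν σ y z : ℝ} (hν : ν ≠ 0) (hσ : 0 ≤ σ)
    (h : ν ^ 2 * y = σ * z) : y = (√σ / ν) ^ 2 * z := by
  rw [div_pow, Real.sq_sqrt hσ]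
  field_simp
  linarith

section HalfLineODE

variable {S : Set ℝ} {f : ℝ → ℝ} {μ L : ℝ}

/-- First integral of `f'' = μ² f`: `(f' - μ f) exp (μ x)` is constant on `S`. -/
lemma derivWithin_sub_mul_eq_mul_exp_of_ode (hS : UniqueDiffOn ℝ S) (hconv : Convex ℝ S)
    (hf : ContDiffOn ℝ 2 f S)
    (hode : ∀ x ∈ S, derivWithin (derivWithin f S) S x = μ ^ 2 * f x)
    {x y : ℝ} (hx : x ∈ S) (hy : y ∈ S) :
    derivWithin f S x - μ * f x
      = (derivWithin f S y - μ * f y) * Real.exp (μ * (y - x)) := by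
  set f' := derivWithin f S
  have hf' : ∀ z ∈ S, HasDerivWithinAt f (f' z) S z := fun z hz =>
    (hf.differentiableOn (by norm_num) z hz).hasDerivWithinAt
  have hf'' : ∀ z ∈ S, HasDerivWithinAt f' (μ ^ 2 * f z) S z := fun z hz => by
    rw [← hode z hz]
    exact ((hf.derivWithin hS (m := 1) (by norm_num)).differentiableOn (by norm_num) z hz)
      |>.hasDerivWithinAt
  have hderiv : ∀ z ∈ S,
      HasDerivWithinAt (fun z => (f' z - μ * f z) * Real.exp (μ * z)) 0 S z := by
    intro z hz
    have hexp := ((hasDerivAt_id z).const_mul μ).exp.hasDerivWithinAt (s := S)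
    refine (((hf'' z hz).sub ((hf' z hz).const_mul μ)).mul hexp).congr_deriv ?_
    simp only [id, mul_one, Pi.sub_apply]
    ring
  have hconst : (f' x - μ * f x) * Real.exp (μ * x) = (f' y - μ * f y) * Real.exp (μ * y) := by
    have := hconv.norm_image_sub_le_of_norm_hasDerivWithin_le hderiv (C := 0)
      (fun _ _ => by simp) hy hx
    rwa [zero_mul, norm_le_zero_iff, sub_eq_zero] at this
  rw [mul_sub, Real.exp_sub, ← mul_div_assoc, ← hconst,
    mul_div_cancel_right₀ _ (Real.exp_ne_zero _)]

/-- Boundedness rules out the mode `exp (μ (L - x))` of `f'' = μ² f`, which grows along `l`. -/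
lemma derivWithin_eq_mul_of_bounded_of_ode {l : Filter ℝ} [l.NeBot]
    (hS : UniqueDiffOn ℝ S) (hconv : Convex ℝ S) (hL : L ∈ S)
    (hlS : ∀ᶠ x in l, x ∈ S) (hl : Tendsto (fun x => μ * (L - x)) l atTop)
    (hb : ∃ M, ∀ x ∈ S, |f x| ≤ M) (hf : ContDiffOn ℝ 2 f S)
    (hode : ∀ x ∈ S, derivWithin (derivWithin f S) S x = μ ^ 2 * f x) :
    derivWithin f S L = μ * f L := by
  obtain ⟨M, hM⟩ := hb
  have hode' : ∀ x ∈ S, derivWithin (derivWithin f S) S x = (-μ) ^ 2 * f x := by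
    simpa only [neg_sq] using hode
  set A := derivWithin f S L - μ * f L
  set B := derivWithin f S L + μ * f L
  suffices A = 0 by linarith
  refine eq_zero_of_eventually_abs_mul_exp_le hl (M := |B| + 2 * |μ| * M) ?_
  filter_upwards [hlS, hl.eventually_ge_atTop 0] with x hx hpos
  have hgrowing := derivWithin_sub_mul_eq_mul_exp_of_ode hS hconv hf hode hx hL
  have hdecaying := derivWithin_sub_mul_eq_mul_exp_of_ode hS hconv hf hode' hx hL
  have hsplit : A * Real.exp (μ * (L - x)) = B * Real.exp (-μ * (L - x)) - 2 * μ * f x := by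
    simp only [A, B, ← hgrowing]
    linear_combination hdecaying
  have hB : |B * Real.exp (-μ * (L - x))| ≤ |B| := by
    rw [abs_mul, Real.abs_exp]
    exact mul_le_of_le_one_right (abs_nonneg B) (Real.exp_le_one_iff.2 (by linarith))
  have hfx : |2 * μ * f x| ≤ 2 * |μ| * M := by
    rw [abs_mul, abs_mul, abs_two]
    exact mul_le_mul_of_nonneg_left (hM x hx) (by positivity)
  rw [hsplit]
  exact (abs_sub _ _).trans (add_le_add hB hfx)

end HalfLineODE

section InterfaceFlux

variable {f : ℝ → ℝ} {ν σ L : ℝ}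

lemma derivWithin_Iic_eq_of_bounded_of_ode (hν : 0 < ν) (hσ : 0 < σ)
    (hb : ∃ M, ∀ x ∈ Iic L, |f x| ≤ M) (hf : ContDiffOn ℝ 2 f (Iic L))
    (hode : ∀ x ∈ Iic L, ν ^ 2 * derivWithin (derivWithin f (Iic L)) (Iic L) x = σ * f x) :
    derivWithin f (Iic L) L = √σ / ν * f L :=
  derivWithin_eq_mul_of_bounded_of_ode (uniqueDiffOn_Iic L) (convex_Iic L) self_mem_Iic
    (eventually_le_atBot L)
    ((tendsto_atTop_add_const_left _ L tendsto_neg_atBot_atTop).const_mul_atTop (by positivity))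
    hb hf fun x hx => eq_sqrt_div_sq_mul_of_sq_mul_eq hν.ne' hσ.le (hode x hx)

lemma derivWithin_Ici_eq_of_bounded_of_ode (hν : 0 < ν) (hσ : 0 < σ)
    (hb : ∃ M, ∀ x ∈ Ici L, |f x| ≤ M) (hf : ContDiffOn ℝ 2 f (Ici L))
    (hode : ∀ x ∈ Ici L, ν ^ 2 * derivWithin (derivWithin f (Ici L)) (Ici L) x = σ * f x) :
    derivWithin f (Ici L) L = -(√σ / ν) * f L := by
  refine derivWithin_eq_mul_of_bounded_of_ode (uniqueDiffOn_Ici L) (convex_Ici L) self_mem_Ici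
    (eventually_ge_atTop L) ?_ hb hf
    fun x hx => by rw [neg_sq]; exact eq_sqrt_div_sq_mul_of_sq_mul_eq hν.ne' hσ.le (hode x hx)
  simp_rw [neg_mul_comm, neg_sub]
  exact (tendsto_atTop_add_const_right _ (-L) tendsto_id).const_mul_atTop (by positivity)

end InterfaceFlux

theorem nnwr_delay_parabolic_convergence_general
    (ν τ a₁ a₂ L θ s : ℝ) (hν : 0 < ν)
    (hσ : 0 < s + a₁ + a₂ * Real.exp (-τ * s))
    (g : ℕ → ℝ)
    (hiter : ∀ k : ℕ, ∃ e₁ φ₁ e₂ φ₂ : ℝ → ℝ,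
      (∃ M : ℝ, ∀ x ∈ Iic L, |e₁ x| ≤ M) ∧
      ContDiffOn ℝ 2 e₁ (Iic L) ∧
      (∀ x ∈ Iic L, ν ^ 2 * derivWithin (derivWithin e₁ (Iic L)) (Iic L) x
          = (s + a₁ + a₂ * Real.exp (-τ * s)) * e₁ x) ∧
      (∃ M : ℝ, ∀ x ∈ Iic L, |φ₁ x| ≤ M) ∧
      ContDiffOn ℝ 2 φ₁ (Iic L) ∧
      (∀ x ∈ Iic L, ν ^ 2 * derivWithin (derivWithin φ₁ (Iic L)) (Iic L) x
          = (s + a₁ + a₂ * Real.exp (-τ * s)) * φ₁ x) ∧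
      (∃ M : ℝ, ∀ x ∈ Ici L, |e₂ x| ≤ M) ∧
      ContDiffOn ℝ 2 e₂ (Ici L) ∧
      (∀ x ∈ Ici L, ν ^ 2 * derivWithin (derivWithin e₂ (Ici L)) (Ici L) x
          = (s + a₁ + a₂ * Real.exp (-τ * s)) * e₂ x) ∧
      (∃ M : ℝ, ∀ x ∈ Ici L, |φ₂ x| ≤ M) ∧
      ContDiffOn ℝ 2 φ₂ (Ici L) ∧
      (∀ x ∈ Ici L, ν ^ 2 * derivWithin (derivWithin φ₂ (Ici L)) (Ici L) x
          = (s + a₁ + a₂ * Real.exp (-τ * s)) * φ₂ x) ∧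
      e₁ L = g k ∧ e₂ L = g k ∧
      derivWithin φ₁ (Iic L) L
        = derivWithin e₁ (Iic L) L - derivWithin e₂ (Ici L) L ∧
      -derivWithin φ₂ (Ici L) L
        = derivWithin e₁ (Iic L) L - derivWithin e₂ (Ici L) L ∧
      g (k + 1) = g k - θ * (φ₁ L + φ₂ L)) :
    (∀ k : ℕ, g k = (1 - 4 * θ) ^ k * g 0) ∧
    (θ = 1 / 4 → ∀ k : ℕ, 1 ≤ k → g k = 0) ∧
    (0 < θ → θ < 1 / 2 →
      (∀ k : ℕ, |g k| ≤ |1 - 4 * θ| ^ k * |g 0|) ∧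
      Tendsto g atTop (nhds 0)) := by
  set μ := √(s + a₁ + a₂ * Real.exp (-τ * s)) / ν
  have hμ : μ ≠ 0 := div_ne_zero (Real.sqrt_pos.2 hσ).ne' hν.ne'
  have hstep : ∀ k, g (k + 1) = (1 - 4 * θ) * g k := fun k => by
    obtain ⟨e₁, φ₁, e₂, φ₂, hbe₁, hce₁, hoe₁, hbφ₁, hcφ₁, hoφ₁, hbe₂, hce₂, hoe₂, hbφ₂, hcφ₂,
      hoφ₂, he₁, he₂, hN₁, hN₂, hupdate⟩ := hiter k
    have hfe₁ := he₁ ▸ derivWithin_Iic_eq_of_bounded_of_ode hν hσ hbe₁ hce₁ hoe₁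
    have hfe₂ := he₂ ▸ derivWithin_Ici_eq_of_bounded_of_ode hν hσ hbe₂ hce₂ hoe₂
    have hfφ₁ := derivWithin_Iic_eq_of_bounded_of_ode hν hσ hbφ₁ hcφ₁ hoφ₁
    have hfφ₂ := derivWithin_Ici_eq_of_bounded_of_ode hν hσ hbφ₂ hcφ₂ hoφ₂
    have hφ₁ : φ₁ L = 2 * g k :=
      mul_left_cancel₀ hμ (by linear_combination -hfφ₁ + hN₁ + hfe₁ - hfe₂)
    have hφ₂ : φ₂ L = 2 * g k :=
      mul_left_cancel₀ hμ (by linear_combination hfφ₂ + hN₂ + hfe₁ - hfe₂)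
    rw [hupdate, hφ₁, hφ₂]
    ring
  have hgeom : ∀ k, g k = (1 - 4 * θ) ^ k * g 0 := fun k => by
    induction k with
    | zero => simp
    | succ k ih => rw [hstep, ih, pow_succ]; ring
  refine ⟨hgeom, fun hθ k hk => ?_, fun hθ₀ hθ₁ => ⟨fun k => ?_, ?_⟩⟩
  · rw [hgeom, hθ]
    norm_num [zero_pow (Nat.one_le_iff_ne_zero.1 hk)]
  · rw [hgeom, abs_mul, abs_pow]
  · have hr : |1 - 4 * θ| < 1 := abs_lt.2 ⟨by linarith, by linarith⟩
    simpa [← hgeom] using (tendsto_pow_atTop_nhds_zero_of_abs_lt_one hr).mul_const (g 0)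

theorem nnwr_delay_parabolic_convergence
    (ν τ a₁ a₂ L θ s : ℝ) (hν : 0 < ν) (hτ : 0 < τ)
    (hσ : 0 < s + a₁ + a₂ * Real.exp (-τ * s))
    (g : ℕ → ℝ)
    (hiter : ∀ k : ℕ, ∃ e₁ φ₁ e₂ φ₂ : ℝ → ℝ,
      (∃ M : ℝ, ∀ x ∈ Iic L, |e₁ x| ≤ M) ∧
      ContDiffOn ℝ 2 e₁ (Iic L) ∧
      (∀ x ∈ Iic L, ν ^ 2 * derivWithin (derivWithin e₁ (Iic L)) (Iic L) x
          = (s + a₁ + a₂ * Real.exp (-τ * s)) * e₁ x) ∧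
      (∃ M : ℝ, ∀ x ∈ Iic L, |φ₁ x| ≤ M) ∧
      ContDiffOn ℝ 2 φ₁ (Iic L) ∧
      (∀ x ∈ Iic L, ν ^ 2 * derivWithin (derivWithin φ₁ (Iic L)) (Iic L) x
          = (s + a₁ + a₂ * Real.exp (-τ * s)) * φ₁ x) ∧
      (∃ M : ℝ, ∀ x ∈ Ici L, |e₂ x| ≤ M) ∧
      ContDiffOn ℝ 2 e₂ (Ici L) ∧
      (∀ x ∈ Ici L, ν ^ 2 * derivWithin (derivWithin e₂ (Ici L)) (Ici L) x
          = (s + a₁ + a₂ * Real.exp (-τ * s)) * e₂ x) ∧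
      (∃ M : ℝ, ∀ x ∈ Ici L, |φ₂ x| ≤ M) ∧
      ContDiffOn ℝ 2 φ₂ (Ici L) ∧
      (∀ x ∈ Ici L, ν ^ 2 * derivWithin (derivWithin φ₂ (Ici L)) (Ici L) x
          = (s + a₁ + a₂ * Real.exp (-τ * s)) * φ₂ x) ∧
      e₁ L = g k ∧ e₂ L = g k ∧
      derivWithin φ₁ (Iic L) L
        = derivWithin e₁ (Iic L) L - derivWithin e₂ (Ici L) L ∧
      -derivWithin φ₂ (Ici L) L
        = derivWithin e₁ (Iic L) L - derivWithin e₂ (Ici L) L ∧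
      g (k + 1) = g k - θ * (φ₁ L + φ₂ L)) :
    (∀ k : ℕ, g k = (1 - 4 * θ) ^ k * g 0) ∧
    (θ = 1 / 4 → ∀ k : ℕ, 1 ≤ k → g k = 0) ∧
    (0 < θ → θ < 1 / 2 →
      (∀ k : ℕ, |g k| ≤ |1 - 4 * θ| ^ k * |g 0|) ∧
      Tendsto g atTop (nhds 0)) :=
  nnwr_delay_parabolic_convergence_general ν τ a₁ a₂ L θ s hν hσ g hiter
end

section
/- Let μ > 0, a > 0, b > 0 and h ∈ ℝ. Suppose e₁ : ℝ → ℝ is twice continuously differentiable on [−a, 0], satisfies e₁'' = μ²·e₁ on [−a, 0], e₁(−a) = 0 and e₁(0) = h; and suppose e₂ : ℝ → ℝ is twice continuously differentiable on [0, b], satisfies e₂'' = μ²·e₂ on [0, b], e₂(b) = 0 and e₂'(0) = e₁'(0) (one-sided derivatives at 0). Then e₂(0) = −coth(μa)·tanh(μb)·h. In particular, if a = b then e₂(0) = −h. -/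
/-!
On each subdomain the error vanishes at the outer boundary point `c`, so it is a multiple of
`sinh (μ (x - c))`. Instead of solving the ODE, note that the Wronskian of `e` with
`sinh (μ (x - c))` is constant and vanishes at `c`; this ties `e' 0` to `e 0` on either side,
and matching the fluxes at the interface yields the transmission factor.
-/

open Set Filter

/-- The hyperbolic cotangent. -/
noncomputable def coth (x : ℝ) : ℝ := Real.cosh x / Real.sinh x

open Real

section SinhWronskian

variable {μ : ℝ} {e : ℝ → ℝ}

theorem hasDerivWithinAt_sinh_wronskian {s : Set ℝ} (he : DifferentiableOn ℝ e s)
    (he' : DifferentiableOn ℝ (derivWithin e s) s)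
    (hode : ∀ x ∈ s, derivWithin (derivWithin e s) s x = μ ^ 2 * e x) (c : ℝ) {x : ℝ}
    (hx : x ∈ s) :
    HasDerivWithinAt
      (fun y => derivWithin e s y * sinh (μ * (y - c)) - μ * e y * cosh (μ * (y - c)))
      0 s x := by
  have hlin : HasDerivAt (fun y => μ * (y - c)) μ x := by
    simpa using ((hasDerivAt_id x).sub_const c).const_mul μ
  have he'x := (he' x hx).hasDerivWithinAt
  rw [hode x hx] at he'x
  refine ((he'x.mul hlin.sinh.hasDerivWithinAt).sub
    (((he x hx).hasDerivWithinAt.const_mul μ).mul hlin.cosh.hasDerivWithinAt)).congr_deriv ?_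
  ring

theorem derivWithin_mul_sinh_eq_of_apply_eq_zero {l r c x : ℝ}
    (he : DifferentiableOn ℝ e (Icc l r))
    (he' : DifferentiableOn ℝ (derivWithin e (Icc l r)) (Icc l r))
    (hode : ∀ x ∈ Icc l r, derivWithin (derivWithin e (Icc l r)) (Icc l r) x = μ ^ 2 * e x)
    (hc : c ∈ Icc l r) (hec : e c = 0) (hx : x ∈ Icc l r) :
    derivWithin e (Icc l r) x * sinh (μ * (x - c)) = μ * e x * cosh (μ * (x - c)) := by
  have hW {y} (hy : y ∈ Icc l r) := hasDerivWithinAt_sinh_wronskian he he' hode c hy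
  have hconst := constant_of_derivWithin_zero
    (fun y hy => (hW hy).differentiableWithinAt)
    (fun y hy => (hW (Ico_subset_Icc_self hy)).derivWithin
      (uniqueDiffOn_Icc (hy.1.trans_lt hy.2) y (Ico_subset_Icc_self hy)))
  have hWx := (hconst x hx).trans (hconst c hc).symm
  simp only [sub_self, mul_zero, sinh_zero, hec] at hWx
  linarith

end SinhWronskian

theorem coth_mul_tanh {x : ℝ} (hx : x ≠ 0) : coth x * tanh x = 1 := by
  have : sinh x ≠ 0 := sinh_ne_zero.2 hx
  rw [coth, tanh_eq_sinh_div_cosh]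
  field_simp

theorem dnwr_bounded_transmission
    (μ a b h : ℝ) (hμ : 0 < μ) (ha : 0 < a) (hb : 0 < b)
    (e₁ e₂ : ℝ → ℝ)
    (h1C2 : ContDiffOn ℝ 2 e₁ (Icc (-a) 0))
    (h1ode : ∀ x ∈ Icc (-a) 0,
      derivWithin (derivWithin e₁ (Icc (-a) 0)) (Icc (-a) 0) x = μ ^ 2 * e₁ x)
    (h1bc : e₁ (-a) = 0) (h1int : e₁ 0 = h)
    (h2C2 : ContDiffOn ℝ 2 e₂ (Icc 0 b))
    (h2ode : ∀ x ∈ Icc 0 b,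
      derivWithin (derivWithin e₂ (Icc 0 b)) (Icc 0 b) x = μ ^ 2 * e₂ x)
    (h2bc : e₂ b = 0)
    (hflux : derivWithin e₂ (Icc 0 b) 0 = derivWithin e₁ (Icc (-a) 0) 0) :
    e₂ 0 = -(coth (μ * a) * Real.tanh (μ * b)) * h ∧
      (a = b → e₂ 0 = -h) := by
  have hu₁ := uniqueDiffOn_Icc (neg_lt_zero.2 ha)
  have hu₂ := uniqueDiffOn_Icc hb
  have H₁ := derivWithin_mul_sinh_eq_of_apply_eq_zero (h1C2.differentiableOn two_ne_zero)
    ((h1C2.derivWithin hu₁ one_add_one_eq_two.le).differentiableOn one_ne_zero) h1ode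
    (left_mem_Icc.2 (neg_lt_zero.2 ha).le) h1bc (right_mem_Icc.2 (neg_lt_zero.2 ha).le)
  have H₂ := derivWithin_mul_sinh_eq_of_apply_eq_zero (h2C2.differentiableOn two_ne_zero)
    ((h2C2.derivWithin hu₂ one_add_one_eq_two.le).differentiableOn one_ne_zero) h2ode
    (right_mem_Icc.2 hb.le) h2bc (left_mem_Icc.2 hb.le)
  rw [hflux, zero_sub, mul_neg, sinh_neg, cosh_neg] at H₂
  rw [sub_neg_eq_add, zero_add, h1int] at H₁
  have hsa : sinh (μ * a) ≠ 0 := sinh_ne_zero.2 (by positivity)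
  have hcb : cosh (μ * b) ≠ 0 := (cosh_pos _).ne'
  have key : e₂ 0 = -(coth (μ * a) * tanh (μ * b)) * h := by
    rw [coth, tanh_eq_sinh_div_cosh]
    field_simp
    apply mul_left_cancel₀ hμ.ne'
    linear_combination (-sinh (μ * b)) * H₁ - sinh (μ * a) * H₂
  refine ⟨key, fun hab => ?_⟩
  rw [key, ← hab, coth_mul_tanh (by positivity), neg_one_mul]
end

section
/- Let μ > 0, a > 0, b > 0 and g ∈ ℝ. Suppose e₁ : ℝ → ℝ is twice continuously differentiable on [−a, 0], satisfies e₁'' = μ²·e₁ on [−a, 0], e₁(−a) = 0 and e₁(0) = g; and suppose e₂ : ℝ → ℝ is twice continuously differentiable on [0, b], satisfies e₂'' = μ²·e₂ on [0, b], e₂(b) = 0 and e₂(0) = g. Then e₁'(0) − e₂'(0) = μ·(coth(μa) + coth(μb))·g, where derivatives at 0 are one-sided. -/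
open Set Filter

/-!
Both subdomain solutions are determined by Wronskian identities. For `e'' = μ² e` on `[c, d]` and
any `s` with `s'' = μ² s` on `ℝ`, the Wronskian `e' s - e s'` is constant on `[c, d]`. Taking
`s = sinh (μ (· - c))`, which vanishes at `c`, gives `e'(d) = μ coth (μ (d - c)) e(d)` when
`e(c) = 0`; taking `s = sinh (μ (· - d))` gives `e'(c) = -μ coth (μ (d - c)) e(c)` when `e(d) = 0`.
-/

section SecondOrderODE

variable {k μ c d : ℝ} {e : ℝ → ℝ}

theorem wronskian_eq_of_derivWithin_derivWithin_eq (hcd : c < d)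
    (hC2 : ContDiffOn ℝ 2 e (Icc c d))
    (hode : ∀ x ∈ Icc c d, derivWithin (derivWithin e (Icc c d)) (Icc c d) x = k * e x)
    {s s' : ℝ → ℝ} (hs : ∀ x, HasDerivAt s (s' x) x) (hs' : ∀ x, HasDerivAt s' (k * s x) x) :
    derivWithin e (Icc c d) d * s d - e d * s' d
      = derivWithin e (Icc c d) c * s c - e c * s' c := by
  set I := Icc c d
  have hI : UniqueDiffOn ℝ I := uniqueDiffOn_Icc hcd
  have he : DifferentiableOn ℝ e I := hC2.differentiableOn (by norm_num)
  have he' : DifferentiableOn ℝ (derivWithin e I) I :=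
    (hC2.derivWithin hI (m := 1) (by norm_num)).differentiableOn one_ne_zero
  have hW : ∀ x ∈ I,
      HasDerivWithinAt (fun x => derivWithin e I x * s x - e x * s' x) 0 I x := by
    intro x hx
    have he'' : HasDerivWithinAt (derivWithin e I) (k * e x) I x :=
      hode x hx ▸ (he' x hx).hasDerivWithinAt
    exact ((he''.mul (hs x).hasDerivWithinAt).sub
      ((he x hx).hasDerivWithinAt.mul (hs' x).hasDerivWithinAt)).congr_deriv (by ring)
  refine constant_of_derivWithin_zero (fun x hx => (hW x hx).differentiableWithinAt)
    (fun x hx => ?_) d (right_mem_Icc.2 hcd.le)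
  exact (hW x (Ico_subset_Icc_self hx)).derivWithin (hI x (Ico_subset_Icc_self hx))

theorem hasDerivAt_sinh_mul_sub (μ x₀ x : ℝ) :
    HasDerivAt (fun x => Real.sinh (μ * (x - x₀))) (μ * Real.cosh (μ * (x - x₀))) x := by
  have := (Real.hasDerivAt_sinh _).comp x (((hasDerivAt_id' x).sub_const x₀).const_mul μ)
  exact this.congr_deriv (by ring)

theorem hasDerivAt_mul_cosh_mul_sub (μ x₀ x : ℝ) :
    HasDerivAt (fun x => μ * Real.cosh (μ * (x - x₀))) (μ ^ 2 * Real.sinh (μ * (x - x₀))) x := by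
  have := ((Real.hasDerivAt_cosh _).comp x
    (((hasDerivAt_id' x).sub_const x₀).const_mul μ)).const_mul μ
  exact this.congr_deriv (by ring)

theorem wronskian_sinh_mul_sub_eq (hcd : c < d) (hC2 : ContDiffOn ℝ 2 e (Icc c d))
    (hode : ∀ x ∈ Icc c d, derivWithin (derivWithin e (Icc c d)) (Icc c d) x = μ ^ 2 * e x)
    (x₀ : ℝ) :
    derivWithin e (Icc c d) d * Real.sinh (μ * (d - x₀)) - e d * (μ * Real.cosh (μ * (d - x₀)))
      = derivWithin e (Icc c d) c * Real.sinh (μ * (c - x₀))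
        - e c * (μ * Real.cosh (μ * (c - x₀))) :=
  wronskian_eq_of_derivWithin_derivWithin_eq hcd hC2 hode (hasDerivAt_sinh_mul_sub μ x₀)
    (hasDerivAt_mul_cosh_mul_sub μ x₀)

theorem derivWithin_Icc_right_eq_of_left_eq_zero (hμ : μ ≠ 0) (hcd : c < d)
    (hC2 : ContDiffOn ℝ 2 e (Icc c d))
    (hode : ∀ x ∈ Icc c d, derivWithin (derivWithin e (Icc c d)) (Icc c d) x = μ ^ 2 * e x)
    (hc : e c = 0) :
    derivWithin e (Icc c d) d = μ * coth (μ * (d - c)) * e d := by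
  have hW := wronskian_sinh_mul_sub_eq hcd hC2 hode c
  have hsinh : Real.sinh (μ * (d - c)) ≠ 0 :=
    Real.sinh_ne_zero.2 (mul_ne_zero hμ (sub_ne_zero.2 hcd.ne'))
  simp only [hc, sub_self, mul_zero, Real.sinh_zero, zero_mul] at hW
  rw [coth]
  field_simp
  linarith

theorem derivWithin_Icc_left_eq_of_right_eq_zero (hμ : μ ≠ 0) (hcd : c < d)
    (hC2 : ContDiffOn ℝ 2 e (Icc c d))
    (hode : ∀ x ∈ Icc c d, derivWithin (derivWithin e (Icc c d)) (Icc c d) x = μ ^ 2 * e x)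
    (hd : e d = 0) :
    derivWithin e (Icc c d) c = -(μ * coth (μ * (d - c)) * e c) := by
  have hW := wronskian_sinh_mul_sub_eq hcd hC2 hode d
  have hsinh : Real.sinh (μ * (d - c)) ≠ 0 :=
    Real.sinh_ne_zero.2 (mul_ne_zero hμ (sub_ne_zero.2 hcd.ne'))
  rw [← neg_sub d c, mul_neg, Real.sinh_neg, Real.cosh_neg] at hW
  simp only [hd, sub_self, mul_zero, Real.sinh_zero, zero_mul] at hW
  rw [coth]
  field_simp
  linarith

end SecondOrderODE

theorem nnwr_bounded_dirichlet_flux_jump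
    (μ a b g : ℝ) (hμ : 0 < μ) (ha : 0 < a) (hb : 0 < b)
    (e₁ e₂ : ℝ → ℝ)
    (h1C2 : ContDiffOn ℝ 2 e₁ (Icc (-a) 0))
    (h1ode : ∀ x ∈ Icc (-a) 0,
      derivWithin (derivWithin e₁ (Icc (-a) 0)) (Icc (-a) 0) x = μ ^ 2 * e₁ x)
    (h1bc : e₁ (-a) = 0) (h1int : e₁ 0 = g)
    (h2C2 : ContDiffOn ℝ 2 e₂ (Icc 0 b))
    (h2ode : ∀ x ∈ Icc 0 b,
      derivWithin (derivWithin e₂ (Icc 0 b)) (Icc 0 b) x = μ ^ 2 * e₂ x)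
    (h2bc : e₂ b = 0) (h2int : e₂ 0 = g) :
    derivWithin e₁ (Icc (-a) 0) 0 - derivWithin e₂ (Icc 0 b) 0
      = μ * (coth (μ * a) + coth (μ * b)) * g := by
  rw [derivWithin_Icc_right_eq_of_left_eq_zero hμ.ne' (neg_lt_zero.2 ha) h1C2 h1ode h1bc,
    derivWithin_Icc_left_eq_of_right_eq_zero hμ.ne' hb h2C2 h2ode h2bc, h1int, h2int,
    zero_sub, neg_neg, sub_zero]
  ring
end

section
/- Let μ > 0, a > 0, b > 0 and θ ∈ ℝ. Let (h_k)_{k≥0} be a sequence of real numbers and suppose that for every k ≥ 1 there exist functions e₁ᵏ, e₂ᵏ : ℝ → ℝ such that: (i) e₁ᵏ is twice continuously differentiable on [−a, 0], satisfies (e₁ᵏ)'' = μ²·e₁ᵏ on [−a, 0], e₁ᵏ(−a) = 0 and e₁ᵏ(0) = h_{k−1}; (ii) e₂ᵏ is twice continuously differentiable on [0, b], satisfies (e₂ᵏ)'' = μ²·e₂ᵏ on [0, b], e₂ᵏ(b) = 0 and (e₂ᵏ)'(0) = (e₁ᵏ)'(0) (one-sided derivatives at 0); (iii) h_k = θ·e₂ᵏ(0)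 + (1 − θ)·h_{k−1}. Then h_k = (1 − θ − θ·coth(μa)·tanh(μb))ᵏ·h_0 for all k ≥ 0. -/
/-!
On each subdomain the error solves `e'' = μ² e`, so `(μ e, e')` moves along a hyperbolic
rotation: `(μ e, e')(x) = R(μ (x - l)) (μ e, e')(l)` with
`R(t) = [[cosh t, sinh t], [sinh t, cosh t]]`.
The Dirichlet solve on `(-a, 0)` therefore has interface flux `e₁'(0) = μ coth(μ a) h`, and the
Neumann solve on `(0, b)` with that flux has `e₂(0) = -tanh(μ b) coth(μ a) h`; the relaxed update
multiplies `h` by the constant `1 - θ - θ coth(μ a) tanh(μ b)` at every step.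
-/

open Set Filter

open Real

theorem Convex.eq_of_hasDerivWithinAt_zero {s : Set ℝ} (hs : Convex ℝ s) {g : ℝ → ℝ}
    (hg : ∀ x ∈ s, HasDerivWithinAt g 0 s x) {x y : ℝ} (hx : x ∈ s) (hy : y ∈ s) :
    g y = g x := by
  have := hs.norm_image_sub_le_of_norm_hasDerivWithin_le hg (fun _ _ => norm_zero.le) hx hy
  rwa [zero_mul, norm_le_zero_iff, sub_eq_zero] at this

section HyperbolicPair

variable {μ l : ℝ} {s : Set ℝ} {p q : ℝ → ℝ}

theorem hasDerivWithinAt_mul_cosh_sub_mul_sinh {x : ℝ}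
    (hp : HasDerivWithinAt p (μ * q x) s x) (hq : HasDerivWithinAt q (μ * p x) s x) :
    HasDerivWithinAt (fun y => p y * cosh (μ * (y - l)) - q y * sinh (μ * (y - l))) 0 s x := by
  have hlin : HasDerivAt (fun y => μ * (y - l)) μ x := by
    simpa using ((hasDerivAt_id x).sub_const l).const_mul μ
  exact ((hp.mul hlin.cosh.hasDerivWithinAt).sub (hq.mul hlin.sinh.hasDerivWithinAt)).congr_deriv
    (by ring)

theorem eq_cosh_add_sinh_of_hasDerivWithinAt (hs : Convex ℝ s) (hl : l ∈ s)
    (hp : ∀ x ∈ s, HasDerivWithinAt p (μ * q x) s x)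
    (hq : ∀ x ∈ s, HasDerivWithinAt q (μ * p x) s x) {x : ℝ} (hx : x ∈ s) :
    p x = p l * cosh (μ * (x - l)) + q l * sinh (μ * (x - l)) ∧
      q x = p l * sinh (μ * (x - l)) + q l * cosh (μ * (x - l)) := by
  have hP := hs.eq_of_hasDerivWithinAt_zero
    (fun y hy => hasDerivWithinAt_mul_cosh_sub_mul_sinh (l := l) (hp y hy) (hq y hy)) hl hx
  have hQ := hs.eq_of_hasDerivWithinAt_zero
    (fun y hy => hasDerivWithinAt_mul_cosh_sub_mul_sinh (l := l) (hq y hy) (hp y hy)) hl hx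
  simp only [sub_self, mul_zero, cosh_zero, sinh_zero, mul_one, sub_zero] at hP hQ
  have hpyth := cosh_sq_sub_sinh_sq (μ * (x - l))
  constructor
  · linear_combination cosh (μ * (x - l)) * hP + sinh (μ * (x - l)) * hQ - p x * hpyth
  · linear_combination sinh (μ * (x - l)) * hP + cosh (μ * (x - l)) * hQ - q x * hpyth

end HyperbolicPair

section HyperbolicODE

variable {μ l r : ℝ} {f : ℝ → ℝ}

theorem eq_cosh_add_sinh_of_derivWithin_derivWithin_eq (hlr : l < r)
    (hf : ContDiffOn ℝ 2 f (Icc l r))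
    (hode : ∀ x ∈ Icc l r, derivWithin (derivWithin f (Icc l r)) (Icc l r) x = μ ^ 2 * f x)
    {x : ℝ} (hx : x ∈ Icc l r) :
    μ * f x = μ * f l * cosh (μ * (x - l))
        + derivWithin f (Icc l r) l * sinh (μ * (x - l)) ∧
      derivWithin f (Icc l r) x = μ * f l * sinh (μ * (x - l))
        + derivWithin f (Icc l r) l * cosh (μ * (x - l)) := by
  have hdf : DifferentiableOn ℝ (derivWithin f (Icc l r)) (Icc l r) :=
    (hf.derivWithin (uniqueDiffOn_Icc hlr) (m := 1) (by norm_num)).differentiableOn one_ne_zero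
  refine eq_cosh_add_sinh_of_hasDerivWithinAt (convex_Icc l r) (left_mem_Icc.2 hlr.le)
    (fun y hy => ((hf.differentiableOn two_ne_zero y hy).hasDerivWithinAt).const_mul μ)
    (fun y hy => ?_) hx
  have := (hdf y hy).hasDerivWithinAt
  rwa [hode y hy, pow_two, mul_assoc] at this

theorem derivWithin_right_mul_sinh_of_apply_left_eq_zero (hlr : l < r)
    (hf : ContDiffOn ℝ 2 f (Icc l r))
    (hode : ∀ x ∈ Icc l r, derivWithin (derivWithin f (Icc l r)) (Icc l r) x = μ ^ 2 * f x)
    (hl : f l = 0) :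
    derivWithin f (Icc l r) r * sinh (μ * (r - l)) = μ * f r * cosh (μ * (r - l)) := by
  obtain ⟨hval, hder⟩ :=
    eq_cosh_add_sinh_of_derivWithin_derivWithin_eq hlr hf hode (right_mem_Icc.2 hlr.le)
  rw [hl] at hval hder
  linear_combination sinh (μ * (r - l)) * hder - cosh (μ * (r - l)) * hval

theorem mul_apply_left_mul_cosh_of_apply_right_eq_zero (hlr : l < r)
    (hf : ContDiffOn ℝ 2 f (Icc l r))
    (hode : ∀ x ∈ Icc l r, derivWithin (derivWithin f (Icc l r)) (Icc l r) x = μ ^ 2 * f x)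
    (hr : f r = 0) :
    μ * f l * cosh (μ * (r - l)) = -derivWithin f (Icc l r) l * sinh (μ * (r - l)) := by
  obtain ⟨hval, -⟩ :=
    eq_cosh_add_sinh_of_derivWithin_derivWithin_eq hlr hf hode (right_mem_Icc.2 hlr.le)
  rw [hr] at hval
  linear_combination -hval

end HyperbolicODE

theorem dnwr_step {μ a b θ h₀ h₁ : ℝ} (hμ : 0 < μ) (ha : 0 < a) (hb : 0 < b) {e₁ e₂ : ℝ → ℝ}
    (hc₁ : ContDiffOn ℝ 2 e₁ (Icc (-a) 0))
    (hode₁ : ∀ x ∈ Icc (-a) 0,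
      derivWithin (derivWithin e₁ (Icc (-a) 0)) (Icc (-a) 0) x = μ ^ 2 * e₁ x)
    (hleft₁ : e₁ (-a) = 0) (hright₁ : e₁ 0 = h₀)
    (hc₂ : ContDiffOn ℝ 2 e₂ (Icc 0 b))
    (hode₂ : ∀ x ∈ Icc 0 b, derivWithin (derivWithin e₂ (Icc 0 b)) (Icc 0 b) x = μ ^ 2 * e₂ x)
    (hright₂ : e₂ b = 0)
    (hflux : derivWithin e₂ (Icc 0 b) 0 = derivWithin e₁ (Icc (-a) 0) 0)
    (hupdate : h₁ = θ * e₂ 0 + (1 - θ) * h₀) :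
    h₁ = (1 - θ - θ * coth (μ * a) * tanh (μ * b)) * h₀ := by
  have hdirichlet :=
    derivWithin_right_mul_sinh_of_apply_left_eq_zero (neg_lt_zero.2 ha) hc₁ hode₁ hleft₁
  have hneumann := mul_apply_left_mul_cosh_of_apply_right_eq_zero hb hc₂ hode₂ hright₂
  rw [sub_neg_eq_add, zero_add, hright₁] at hdirichlet
  rw [sub_zero, hflux] at hneumann
  have hsinh : 0 < sinh (μ * a) := sinh_pos_iff.2 (by positivity)
  have hcosh : 0 < cosh (μ * b) := cosh_pos _
  rw [hupdate, coth, tanh_eq_sinh_div_cosh]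
  field_simp
  apply mul_left_cancel₀ hμ.ne'
  linear_combination sinh (μ * a) * θ * hneumann - θ * sinh (μ * b) * hdirichlet

theorem dnwr_bounded_recurrence
    (μ a b θ : ℝ) (hμ : 0 < μ) (ha : 0 < a) (hb : 0 < b)
    (h : ℕ → ℝ)
    (hiter : ∀ k : ℕ, ∃ e₁ e₂ : ℝ → ℝ,
      ContDiffOn ℝ 2 e₁ (Icc (-a) 0) ∧
      (∀ x ∈ Icc (-a) 0,
        derivWithin (derivWithin e₁ (Icc (-a) 0)) (Icc (-a) 0) x = μ ^ 2 * e₁ x) ∧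
      e₁ (-a) = 0 ∧ e₁ 0 = h k ∧
      ContDiffOn ℝ 2 e₂ (Icc 0 b) ∧
      (∀ x ∈ Icc 0 b,
        derivWithin (derivWithin e₂ (Icc 0 b)) (Icc 0 b) x = μ ^ 2 * e₂ x) ∧
      e₂ b = 0 ∧
      derivWithin e₂ (Icc 0 b) 0 = derivWithin e₁ (Icc (-a) 0) 0 ∧
      h (k + 1) = θ * e₂ 0 + (1 - θ) * h k) :
    ∀ k : ℕ, h k = (1 - θ - θ * coth (μ * a) * Real.tanh (μ * b)) ^ k * h 0 := by
  intro k
  induction k with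
  | zero => simp
  | succ k ih =>
    obtain ⟨e₁, e₂, hc₁, hode₁, hleft₁, hright₁, hc₂, hode₂, hright₂, hflux, hupdate⟩ := hiter k
    rw [dnwr_step hμ ha hb hc₁ hode₁ hleft₁ hright₁ hc₂ hode₂ hright₂ hflux hupdate, ih]
    ring
end

section
/- Let μ > 0, a > 0, b > 0 and θ ∈ ℝ. Let (g_k)_{k≥0} be a sequence of real numbers and suppose that for every k ≥ 1 there exist functions e₁ᵏ, φ₁ᵏ (twice continuously differentiable on [−a, 0], satisfying f'' = μ²·f on [−a, 0] and f(−a) = 0) and e₂ᵏ, φ₂ᵏ (twice continuously differentiable on [0, b], satisfying f'' = μ²·f on [0, b] and f(b) = 0) such that e₁ᵏ(0) = g_{k−1}, e₂ᵏ(0) = g_{k−1}, (φ₁ᵏ)'(0) = (e₁ᵏ)'(0) − (e₂ᵏ)'(0), (φ₂ᵏ)'(0) = (e₂ᵏ)'(0) − (e₁ᵏ)'(0) (one-sided derivatives at 0), and g_k = g_{k−1} − θ·(φ₁ᵏ(0) + φ₂ᵏ(0)). Then g_k = (1 − θ·(2 + tanh(μa)/tanh(μb) + tanh(μb)/tanh(μa)))ᵏ·g_0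 for all k ≥ 0. -/
/-!
The Wronskian of a solution of `f'' = μ² f` with `sinh(μ(x + a))` (resp. `sinh(μ(b - x))`) is
constant, so a solution on `[-a, 0]` vanishing at `-a` satisfies `μ f(0) = tanh(μa) f'(0)`,
and one on `[0, b]` vanishing at `b` satisfies `μ f(0) = -tanh(μb) f'(0)`. Applied to the
Dirichlet solves this gives the interface flux jump
`e₁'(0) - e₂'(0) = μ g (1/tanh(μa) + 1/tanh(μb))`, and applied to the Neumann solves
`φ₁(0) + φ₂(0) = g (tanh(μa) + tanh(μb)) (1/tanh(μa) + 1/tanh(μb))`, so each step multiplies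
`g` by the same factor.
-/

open Set

def IsSolutionOn (q c d : ℝ) (f : ℝ → ℝ) : Prop :=
  ContDiffOn ℝ 2 f (Icc c d) ∧
    ∀ x ∈ Icc c d, derivWithin (derivWithin f (Icc c d)) (Icc c d) x = q * f x

namespace IsSolutionOn

variable {q c d : ℝ} {f : ℝ → ℝ}

theorem wronskian_right_eq_left (hf : IsSolutionOn q c d f) (hcd : c < d) {s s' : ℝ → ℝ}
    (hs : ∀ x, HasDerivAt s (s' x) x) (hs' : ∀ x, HasDerivAt s' (q * s x) x) :
    f d * s' d - derivWithin f (Icc c d) d * s d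
      = f c * s' c - derivWithin f (Icc c d) c * s c := by
  obtain ⟨hf, hode⟩ := hf
  have hu : UniqueDiffOn ℝ (Icc c d) := uniqueDiffOn_Icc hcd
  have hf' : DifferentiableOn ℝ (derivWithin f (Icc c d)) (Icc c d) :=
    (hf.derivWithin hu (by norm_num : (1 : WithTop ℕ∞) + 1 ≤ 2)).differentiableOn one_ne_zero
  have hW : ∀ x ∈ Icc c d, HasDerivWithinAt
      (fun y ↦ f y * s' y - derivWithin f (Icc c d) y * s y) 0 (Icc c d) x := by
    intro x hx
    have hfx := ((hf.differentiableOn (by norm_num)) x hx).hasDerivWithinAt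
    have hf'x := (hf' x hx).hasDerivWithinAt
    rw [hode x hx] at hf'x
    exact ((hfx.mul (hs' x).hasDerivWithinAt).sub
      (hf'x.mul (hs x).hasDerivWithinAt)).congr_deriv (by ring)
  exact constant_of_derivWithin_zero (fun x hx ↦ (hW x hx).differentiableWithinAt)
    (fun x hx ↦ (hW x (Ico_subset_Icc_self hx)).derivWithin (hu x (Ico_subset_Icc_self hx)))
    d (right_mem_Icc.2 hcd.le)

theorem mul_eq_tanh_mul_derivWithin {μ a : ℝ} (hf : IsSolutionOn (μ ^ 2) (-a) 0 f)
    (ha : 0 < a) (hfa : f (-a) = 0) :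
    f 0 * μ = Real.tanh (μ * a) * derivWithin f (Icc (-a) 0) 0 := by
  have hin (x : ℝ) : HasDerivAt (fun y ↦ μ * (y + a)) μ x := by
    simpa using ((hasDerivAt_id x).add_const a).const_mul μ
  have hwronskian := hf.wronskian_right_eq_left (by linarith)
    (s := fun y ↦ Real.sinh (μ * (y + a))) (s' := fun y ↦ μ * Real.cosh (μ * (y + a)))
    (fun x ↦ by simpa [mul_comm] using (hin x).sinh)
    (fun x ↦ ((hin x).cosh.const_mul μ).congr_deriv (by ring))
  simp only [zero_add, neg_add_cancel, mul_zero, Real.sinh_zero, Real.cosh_zero, hfa] at hwronskian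
  rw [Real.tanh_eq_sinh_div_cosh]
  field_simp [(Real.cosh_pos (μ * a)).ne']
  linarith

theorem mul_eq_neg_tanh_mul_derivWithin {μ b : ℝ} (hf : IsSolutionOn (μ ^ 2) 0 b f)
    (hb : 0 < b) (hfb : f b = 0) :
    f 0 * μ = -(Real.tanh (μ * b) * derivWithin f (Icc 0 b) 0) := by
  have hin (x : ℝ) : HasDerivAt (fun y ↦ μ * (b - y)) (-μ) x := by
    simpa using ((hasDerivAt_id x).const_sub b).const_mul μ
  have hwronskian := hf.wronskian_right_eq_left hb
    (s := fun y ↦ Real.sinh (μ * (b - y))) (s' := fun y ↦ -(μ * Real.cosh (μ * (b - y))))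
    (fun x ↦ (hin x).sinh.congr_deriv (by ring))
    (fun x ↦ ((hin x).cosh.const_mul μ).neg.congr_deriv (by ring))
  simp only [sub_self, sub_zero, mul_zero, Real.sinh_zero, Real.cosh_zero, hfb] at hwronskian
  rw [Real.tanh_eq_sinh_div_cosh]
  field_simp [(Real.cosh_pos (μ * b)).ne']
  linarith

end IsSolutionOn

theorem nnwr_interface_sum {K : Type*} [Field K] {μ t₁ t₂ g A B p₁ p₂ : K} (hμ : μ ≠ 0) (ht₁ : t₁ ≠ 0) (ht₂ : t₂ ≠ 0)
    (hA : g * μ = t₁ * A) (hB : g * μ = -(t₂ * B))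
    (hp₁ : p₁ * μ = t₁ * (A - B)) (hp₂ : p₂ * μ = -(t₂ * (B - A))) :
    p₁ + p₂ = g * (2 + t₁ / t₂ + t₂ / t₁) := by
  have hAB : (A - B) * (t₁ * t₂) = g * μ * (t₁ + t₂) := by
    linear_combination -t₂ * hA - t₁ * hB
  have hp : (p₁ + p₂) * μ = (t₁ + t₂) * (A - B) := by linear_combination hp₁ + hp₂
  field_simp
  apply mul_right_cancel₀ hμ
  linear_combination t₁ * t₂ * hp + (t₁ + t₂) * hAB

theorem eq_pow_mul_of_succ_eq_mul {M : Type*} [Monoid M] {u : ℕ → M} {r : M}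
    (hu : ∀ k, u (k + 1) = r * u k) (k : ℕ) : u k = r ^ k * u 0 := by
  induction k with
  | zero => rw [pow_zero, one_mul]
  | succ k ih => rw [hu, ih, pow_succ', mul_assoc]

theorem nnwr_bounded_recurrence
    (μ a b θ : ℝ) (hμ : 0 < μ) (ha : 0 < a) (hb : 0 < b)
    (g : ℕ → ℝ)
    (hiter : ∀ k : ℕ, ∃ e₁ φ₁ e₂ φ₂ : ℝ → ℝ,
      ContDiffOn ℝ 2 e₁ (Icc (-a) 0) ∧
      (∀ x ∈ Icc (-a) 0,
        derivWithin (derivWithin e₁ (Icc (-a) 0)) (Icc (-a) 0) x = μ ^ 2 * e₁ x) ∧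
      e₁ (-a) = 0 ∧
      ContDiffOn ℝ 2 φ₁ (Icc (-a) 0) ∧
      (∀ x ∈ Icc (-a) 0,
        derivWithin (derivWithin φ₁ (Icc (-a) 0)) (Icc (-a) 0) x = μ ^ 2 * φ₁ x) ∧
      φ₁ (-a) = 0 ∧
      ContDiffOn ℝ 2 e₂ (Icc 0 b) ∧
      (∀ x ∈ Icc 0 b,
        derivWithin (derivWithin e₂ (Icc 0 b)) (Icc 0 b) x = μ ^ 2 * e₂ x) ∧
      e₂ b = 0 ∧
      ContDiffOn ℝ 2 φ₂ (Icc 0 b) ∧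
      (∀ x ∈ Icc 0 b,
        derivWithin (derivWithin φ₂ (Icc 0 b)) (Icc 0 b) x = μ ^ 2 * φ₂ x) ∧
      φ₂ b = 0 ∧
      e₁ 0 = g k ∧ e₂ 0 = g k ∧
      derivWithin φ₁ (Icc (-a) 0) 0
        = derivWithin e₁ (Icc (-a) 0) 0 - derivWithin e₂ (Icc 0 b) 0 ∧
      derivWithin φ₂ (Icc 0 b) 0
        = derivWithin e₂ (Icc 0 b) 0 - derivWithin e₁ (Icc (-a) 0) 0 ∧
      g (k + 1) = g k - θ * (φ₁ 0 + φ₂ 0)) :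
    ∀ k : ℕ, g k
      = (1 - θ * (2 + Real.tanh (μ * a) / Real.tanh (μ * b)
          + Real.tanh (μ * b) / Real.tanh (μ * a))) ^ k * g 0 := by
  have htanh {x : ℝ} (hx : 0 < x) : Real.tanh (μ * x) ≠ 0 :=
    Real.tanh_zero ▸ Real.tanh_injective.ne (mul_pos hμ hx).ne'
  refine eq_pow_mul_of_succ_eq_mul fun k ↦ ?_
  obtain ⟨e₁, φ₁, e₂, φ₂, he₁, he₁'', he₁a, hφ₁, hφ₁'', hφ₁a, he₂, he₂'', he₂b, hφ₂, hφ₂'', hφ₂b,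
    he₁g, he₂g, hφ₁', hφ₂', hupd⟩ := hiter k
  have hsum := nnwr_interface_sum hμ.ne' (htanh ha) (htanh hb)
    (he₁g ▸ IsSolutionOn.mul_eq_tanh_mul_derivWithin ⟨he₁, he₁''⟩ ha he₁a)
    (he₂g ▸ IsSolutionOn.mul_eq_neg_tanh_mul_derivWithin ⟨he₂, he₂''⟩ hb he₂b)
    (hφ₁' ▸ IsSolutionOn.mul_eq_tanh_mul_derivWithin ⟨hφ₁, hφ₁''⟩ ha hφ₁a)
    (hφ₂' ▸ IsSolutionOn.mul_eq_neg_tanh_mul_derivWithin ⟨hφ₂, hφ₂''⟩ hb hφ₂b)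
  rw [hupd, hsum]
  ring
end
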